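/- (Duality for the open chain) For every E ∈ ℂ: det(E·I_{nm} − h) = det(T(E)_{1,1}) · det B_1 ⋯ det B_n, where T(E)_{1,1} denotes the top-left m×m block of T(E). -/
import Mathlib

open Matrix

noncomputable def tstep {m : ℕ} (A B C : Matrix (Fin m) (Fin m) ℂ) (E : ℂ) :
    Matrix (Fin m ⊕ Fin m) (Fin m ⊕ Fin m) ℂ :=
  Matrix.fromBlocks (B⁻¹ * (E • 1 - A)) (-(B⁻¹ * C)) 1 0

/-- The transfer matrix `T(E) = t_n(E) ⋯ t_1(E)` (0-indexed: `t_{n-1} ⋯ t_0`). -/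
noncomputable def transfer {n m : ℕ} (A B C : Fin n → Matrix (Fin m) (Fin m) ℂ) (E : ℂ) :
    Matrix (Fin m ⊕ Fin m) (Fin m ⊕ Fin m) ℂ :=
  ((List.ofFn fun k : Fin n => tstep (A k) (B k) (C k) E).reverse).prod

/-- The block tridiagonal matrix `h` of the open chain:
diagonal blocks `A_k`, upper blocks `B_k`, lower blocks `C_k`. -/
noncomputable def hopen {n m : ℕ} (A B C : Fin n → Matrix (Fin m) (Fin m) ℂ) :
    Matrix (Fin n × Fin m) (Fin n × Fin m) ℂ :=
  fun p q =>
    (if p.1 = q.1 then A p.1 p.2 q.2 else 0)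
    + (if (p.1 : ℕ) + 1 = (q.1 : ℕ) then B p.1 p.2 q.2 else 0)
    + (if (q.1 : ℕ) + 1 = (p.1 : ℕ) then C p.1 p.2 q.2 else 0)

section aux
variable {m : ℕ} {R : Type*} [CommRing R]

noncomputable def Xs (A B' C : ℕ → Matrix (Fin m) (Fin m) R)
    (e : R) : ℕ → Matrix (Fin m) (Fin m) R
  | 0 => 0
  | 1 => 1
  | (k+2) => B' k * ((e • 1 - A k) * Xs A B' C e (k+1) - C k * Xs A B' C e k)

/-- Embed a matrix of `m×m` blocks as one big matrix. -/
def emb {n : ℕ} (f : Fin n → Fin n → Matrix (Fin m) (Fin m) R) :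
    Matrix (Fin n × Fin m) (Fin n × Fin m) R :=
  fun p q => f p.1 q.1 p.2 q.2

lemma emb_mul {n : ℕ} (f g : Fin n → Fin n → Matrix (Fin m) (Fin m) R) :
    emb f * emb g = emb (fun i j => ∑ r, f i r * g r j) := by
  ext ⟨i, x⟩ ⟨j, y⟩
  simp only [emb, Matrix.mul_apply, Fintype.sum_prod_type, Matrix.sum_apply]

def Mb (A B C : ℕ → Matrix (Fin m) (Fin m) R) (e : R) (n : ℕ) :
    Fin n → Fin n → Matrix (Fin m) (Fin m) R :=
  fun i j => if i = j then e • 1 - A i else if (i:ℕ)+1 = j then -B i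
    else if (j:ℕ)+1 = i then -C i else 0

noncomputable def Vb (A B' C : ℕ → Matrix (Fin m) (Fin m) R) (e : R) (n : ℕ) :
    Fin n → Fin n → Matrix (Fin m) (Fin m) R :=
  fun i j => if i ≤ j then Xs A B' C e ((i:ℕ)+1) else 0

noncomputable def Wb (A B B' C : ℕ → Matrix (Fin m) (Fin m) R) (e : R) (n : ℕ) :
    Fin n → Fin n → Matrix (Fin m) (Fin m) R :=
  fun i j => if i = j then B i * Xs A B' C e ((i:ℕ)+2)
    else if (j:ℕ)+1 = i then -(C i * Xs A B' C e ((j:ℕ)+1)) else 0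

lemma sum_fin_eq {α : Type*} [AddCommMonoid α] {n : ℕ} (c : ℕ) (f : Fin n → α) :
    (∑ r : Fin n, if c = (r:ℕ) then f r else 0) = if h : c < n then f ⟨c, h⟩ else 0 := by
  split_ifs with h
  · rw [Finset.sum_eq_single (⟨c, h⟩ : Fin n)]
    · simp
    · intro b _ hb
      rw [if_neg]
      intro hc
      exact hb (by simp [Fin.ext_iff, ← hc])
    · simp
  · apply Finset.sum_eq_zero
    intro r _
    rw [if_neg]
    intro hc
    exact h (hc ▸ r.isLt)

section blockmul
variable {n : ℕ} (A B B' C : ℕ → Matrix (Fin m) (Fin m) R) (e : R)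

lemma sum_fin_eq' {α : Type*} [AddCommMonoid α] {n : ℕ} (c : ℕ) (f : Fin n → α) :
    (∑ r : Fin n, if (r:ℕ)+1 = c then f r else 0)
      = if h : c - 1 < n ∧ 1 ≤ c then f ⟨c-1, h.1⟩ else 0 := by
  split_ifs with h
  · rw [Finset.sum_eq_single (⟨c-1, h.1⟩ : Fin n)]
    · rw [if_pos (by simp; omega)]
    · intro b _ hb
      rw [if_neg]
      intro hc
      exact hb (Fin.ext (by simp; omega))
    · simp
  · apply Finset.sum_eq_zero
    intro r _
    rw [if_neg]
    intro hc
    exact h ⟨by omega, by omega⟩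

lemma hrec (hBB' : ∀ k, B k * B' k = 1) (k : ℕ) :
    (e • 1 - A k) * Xs A B' C e (k+1) - C k * Xs A B' C e k = B k * Xs A B' C e (k+2) := by
  rw [show Xs A B' C e (k+2)
      = B' k * ((e • 1 - A k) * Xs A B' C e (k+1) - C k * Xs A B' C e k) from rfl,
    ← Matrix.mul_assoc, hBB' k, Matrix.one_mul]

lemma blockmul (hBB' : ∀ k, B k * B' k = 1) (i j : Fin n) :
    ∑ r, Mb A B C e n i r * Vb A B' C e n r j = Wb A B B' C e n i j := by
  have split : ∀ r : Fin n, Mb A B C e n i r * Vb A B' C e n r j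
      = (if (i:ℕ) = (r:ℕ) then (e • 1 - A i) * Vb A B' C e n r j else 0)
      + ((if (i:ℕ)+1 = (r:ℕ) then (-B i) * Vb A B' C e n r j else 0)
      + (if (r:ℕ)+1 = (i:ℕ) then (-C i) * Vb A B' C e n r j else 0)) := by
    intro r
    unfold Mb
    by_cases h1 : i = r
    · subst h1
      rw [if_pos rfl, if_pos rfl, if_neg (by omega), if_neg (by omega), add_zero, add_zero]
    · rw [if_neg h1, if_neg (fun h => h1 (Fin.ext h))]
      by_cases h2 : (i:ℕ)+1 = (r:ℕ)
      · rw [if_pos h2, if_pos h2, if_neg (by omega), zero_add, add_zero]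
      · rw [if_neg h2, if_neg h2, zero_add, zero_add]
        by_cases h3 : (r:ℕ)+1 = (i:ℕ)
        · rw [if_pos h3, if_pos h3]
        · rw [if_neg h3, if_neg h3, Matrix.zero_mul]
  rw [Finset.sum_congr rfl (fun r _ => split r), Finset.sum_add_distrib,
    Finset.sum_add_distrib, sum_fin_eq, sum_fin_eq, sum_fin_eq', dif_pos i.isLt, Fin.eta]
  rcases lt_trichotomy i j with h | h | h
  · -- i < j : everything cancels
    have hij : (i:ℕ) < (j:ℕ) := h
    have h2 : (i:ℕ)+1 < n := by omega
    rw [dif_pos h2]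
    have hV1 : Vb A B' C e n i j = Xs A B' C e ((i:ℕ)+1) := if_pos h.le
    have hV2 : Vb A B' C e n ⟨(i:ℕ)+1, h2⟩ j = Xs A B' C e ((i:ℕ)+2) := by
      rw [Vb, if_pos (by rw [Fin.le_def]; simp; omega)]
    have hW : Wb A B B' C e n i j = 0 := by
      rw [Wb, if_neg h.ne, if_neg (by omega)]
    rw [hV1, hV2, hW]
    by_cases hi : 1 ≤ (i:ℕ)
    · rw [dif_pos ⟨by omega, hi⟩]
      have hV3 : Vb A B' C e n ⟨(i:ℕ)-1, by omega⟩ j = Xs A B' C e ((i:ℕ)) := by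
        rw [Vb, if_pos (by rw [Fin.le_def]; simp; omega)]
        rw [show ((⟨(i:ℕ)-1, by omega⟩ : Fin n) : ℕ) + 1 = (i:ℕ) by simp only [Fin.val_mk]; omega]
      rw [hV3, neg_mul, neg_mul, ← hrec A B B' C e hBB' (i:ℕ)]
      abel
    · rw [dif_neg (by omega), add_zero]
      have h0 : (i:ℕ) = 0 := by omega
      have := hrec A B B' C e hBB' (i:ℕ)
      rw [h0] at this ⊢
      rw [show Xs A B' C e 0 = 0 from rfl, Matrix.mul_zero, sub_zero] at this
      rw [this, neg_mul, ← sub_eq_add_neg, sub_self]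
  · -- i = j : diagonal
    subst h
    have hV1 : Vb A B' C e n i i = Xs A B' C e ((i:ℕ)+1) := if_pos le_rfl
    have hW : Wb A B B' C e n i i = B i * Xs A B' C e ((i:ℕ)+2) := if_pos rfl
    have hmid : (if h : (i:ℕ)+1 < n then (-B i) * Vb A B' C e n ⟨(i:ℕ)+1, h⟩ i else 0) = 0 := by
      split_ifs with h2
      · rw [Vb, if_neg (by rw [Fin.le_def]; simp), Matrix.mul_zero]
      · rfl
    rw [hV1, hW, hmid, zero_add]
    by_cases hi : 1 ≤ (i:ℕ)
    · rw [dif_pos ⟨by omega, hi⟩]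
      have hV3 : Vb A B' C e n ⟨(i:ℕ)-1, by omega⟩ i = Xs A B' C e ((i:ℕ)) := by
        rw [Vb, if_pos (by rw [Fin.le_def]; simp)]
        rw [show ((⟨(i:ℕ)-1, by omega⟩ : Fin n) : ℕ) + 1 = (i:ℕ) by simp only [Fin.val_mk]; omega]
      rw [hV3, neg_mul, ← sub_eq_add_neg, hrec A B B' C e hBB']
    · rw [dif_neg (by omega), add_zero]
      have h0 : (i:ℕ) = 0 := by omega
      have := hrec A B B' C e hBB' (i:ℕ)
      rw [h0] at this ⊢
      rw [show Xs A B' C e 0 = 0 from rfl, Matrix.mul_zero, sub_zero] at this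
      exact this
  · -- j < i : subdiagonal
    have hij : (j:ℕ) < (i:ℕ) := h
    have hV1 : Vb A B' C e n i j = 0 := if_neg (not_le.mpr h)
    have hmid : (if h : (i:ℕ)+1 < n then (-B i) * Vb A B' C e n ⟨(i:ℕ)+1, h⟩ j else 0) = 0 := by
      split_ifs with h2
      · rw [Vb, if_neg (by rw [Fin.le_def]; simp; omega), Matrix.mul_zero]
      · rfl
    rw [hV1, hmid, Matrix.mul_zero, zero_add, zero_add, dif_pos ⟨by omega, by omega⟩]
    by_cases hji : (j:ℕ)+1 = (i:ℕ)
    · have hV3 : Vb A B' C e n ⟨(i:ℕ)-1, by omega⟩ j = Xs A B' C e ((j:ℕ)+1) := by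
        rw [Vb, if_pos (by rw [Fin.le_def]; simp; omega)]
        rw [show ((⟨(i:ℕ)-1, by omega⟩ : Fin n) : ℕ) + 1 = (j:ℕ)+1 by simp only [Fin.val_mk]; omega]
      rw [hV3, Wb, if_neg (by omega : ¬ i = j), if_pos hji, neg_mul]
    · have hV3 : Vb A B' C e n ⟨(i:ℕ)-1, by omega⟩ j = 0 := by
        rw [Vb, if_neg (by rw [Fin.le_def]; simp; omega)]
      rw [hV3, Wb, if_neg (by omega : ¬ i = j), if_neg hji, Matrix.mul_zero]
end blockmul

section det
variable {n : ℕ}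

lemma det_emb_triangular (f : Fin n → Fin n → Matrix (Fin m) (Fin m) R)
    (hf : ∀ i j, j < i → f i j = 0) :
    (emb f).det = ∏ i, (f i i).det := by
  have ht : (emb f).BlockTriangular Prod.fst := by
    intro p q hlt
    show f p.1 q.1 p.2 q.2 = 0
    rw [hf _ _ hlt]
    rfl
  rw [ht.det_fintype]
  refine Finset.prod_congr rfl fun k _ => ?_
  let e : Fin m ≃ {p : Fin n × Fin m // p.1 = k} :=
    { toFun := fun x => ⟨(k, x), rfl⟩
      invFun := fun p => p.1.2
      left_inv := fun x => rfl
      right_inv := fun p => Subtype.ext (Prod.ext p.2.symm rfl) }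
  rw [← Matrix.det_submatrix_equiv_self e]
  congr 1

lemma fact (A B B' C : ℕ → Matrix (Fin m) (Fin m) R) (e : R)
    (hBB' : ∀ k, B k * B' k = 1) :
    (emb (Mb A B C e n)).det * ∏ i : Fin n, (Xs A B' C e ((i:ℕ)+1)).det
      = (∏ i : Fin n, (B i).det) * ∏ i : Fin n, (Xs A B' C e ((i:ℕ)+2)).det := by
  have h1 : emb (Mb A B C e n) * emb (Vb A B' C e n) = emb (Wb A B B' C e n) := by
    rw [emb_mul]
    ext ⟨p1, p2⟩ ⟨q1, q2⟩
    exact congrFun (congrFun (blockmul A B B' C e hBB' p1 q1) p2) q2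
  have h2 := congrArg Matrix.det h1
  rw [Matrix.det_mul] at h2
  have hV : (emb (Vb A B' C e n)).det = ∏ i : Fin n, (Xs A B' C e ((i:ℕ)+1)).det := by
    rw [det_emb_triangular (Vb A B' C e n)
      (fun i j hji => by rw [Vb, if_neg (not_le.mpr hji)])]
    exact Finset.prod_congr rfl fun i _ => by rw [Vb, if_pos le_rfl]
  have hW : (emb (Wb A B B' C e n)).det
      = ∏ i : Fin n, ((B i : Matrix (Fin m) (Fin m) R) * Xs A B' C e ((i:ℕ)+2)).det := by
    rw [← Matrix.det_transpose]
    have : (emb (Wb A B B' C e n)).transpose = emb (fun i j => (Wb A B B' C e n j i).transpose) := by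
      ext ⟨i, x⟩ ⟨j, y⟩
      rfl
    rw [this, det_emb_triangular _ (fun i j hji => by
      rw [Wb, if_neg (by intro hh; rw [hh] at hji; exact lt_irrefl _ hji),
        if_neg (by intro hh; have := Fin.lt_def.mp hji; omega)]
      rfl)]
    refine Finset.prod_congr rfl fun i _ => ?_
    rw [Wb, if_pos rfl, Matrix.det_transpose]
  rw [hV] at h2
  rw [h2, hW]
  rw [← Finset.prod_mul_distrib]
  exact Finset.prod_congr rfl fun i _ => Matrix.det_mul _ _

end det

section poly
variable (A B' C : ℕ → Matrix (Fin m) (Fin m) ℂ)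

/-- Map a complex matrix to a constant polynomial matrix. -/
noncomputable def pc (M : Matrix (Fin m) (Fin m) ℂ) : Matrix (Fin m) (Fin m) (Polynomial ℂ) :=
  M.map (Polynomial.C : ℂ →+* Polynomial ℂ)

/-- The solution sequence over the polynomial ring, with `E` replaced by the variable. -/
noncomputable def XsP : ℕ → Matrix (Fin m) (Fin m) (Polynomial ℂ) :=
  Xs (fun j => pc (A j)) (fun j => pc (B' j)) (fun j => pc (C j)) Polynomial.X

lemma entry_deg_le : ∀ k, ∀ p q : Fin m, ((XsP A B' C k) p q).natDegree ≤ k - 1 := by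
  intro k
  induction k using Nat.strong_induction_on with
  | _ k ih =>
    match k with
    | 0 => intro p q; simp [XsP, Xs]
    | 1 =>
      intro p q
      simp only [XsP, Xs, Matrix.one_apply]
      split_ifs <;> simp
    | (k+2) =>
      intro p q
      show ((pc (B' (k)) * (((Polynomial.X : Polynomial ℂ) • (1 : Matrix (Fin m) (Fin m) (Polynomial ℂ))
          - pc (A k)) * XsP A B' C (k+1)
          - pc (C k) * XsP A B' C k)) p q).natDegree ≤ k + 1
      rw [Matrix.mul_apply]
      apply Polynomial.natDegree_sum_le_of_forall_le
      intro r _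
      refine (Polynomial.natDegree_C_mul_le _ _).trans ?_
      rw [Matrix.sub_apply, Matrix.mul_apply, Matrix.mul_apply]
      refine (Polynomial.natDegree_sub_le _ _).trans (max_le ?_ ?_)
      · apply Polynomial.natDegree_sum_le_of_forall_le
        intro s _
        refine (Polynomial.natDegree_mul_le).trans ?_
        have h1 : (((Polynomial.X : Polynomial ℂ) • (1 : Matrix (Fin m) (Fin m) (Polynomial ℂ))
            - pc (A k)) r s).natDegree ≤ 1 := by
          rw [Matrix.sub_apply, Matrix.smul_apply, Matrix.one_apply]
          refine (Polynomial.natDegree_sub_le _ _).trans (max_le ?_ ?_)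
          · split_ifs <;> simp
          · simp [pc, Matrix.map_apply]
        have h2 := ih (k+1) (by omega) s q
        omega
      · apply Polynomial.natDegree_sum_le_of_forall_le
        intro s _
        refine (Polynomial.natDegree_mul_le).trans ?_
        have h1 : ((pc (C k)) r s).natDegree = 0 := by simp [pc, Matrix.map_apply]
        have h2 := ih k (by omega) s q
        omega

/-- Leading coefficient matrices. -/
noncomputable def Lp (B' : ℕ → Matrix (Fin m) (Fin m) ℂ) : ℕ → Matrix (Fin m) (Fin m) ℂ
  | 0 => 1
  | (k+1) => B' k * Lp B' k

lemma entry_coeff : ∀ k, ∀ p q : Fin m, ((XsP A B' C (k+1)) p q).coeff k = Lp B' k p q := by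
  intro k
  induction k with
  | zero =>
    intro p q
    show ((1 : Matrix (Fin m) (Fin m) (Polynomial ℂ)) p q).coeff 0 = (1 : Matrix (Fin m) (Fin m) ℂ) p q
    rw [Matrix.one_apply, Matrix.one_apply, apply_ite (fun x : Polynomial ℂ => x.coeff 0)]
    simp
  | succ k ih =>
    intro p q
    show ((pc (B' k) * (((Polynomial.X : Polynomial ℂ) • (1 : Matrix (Fin m) (Fin m) (Polynomial ℂ))
        - pc (A k)) * XsP A B' C (k+1)
        - pc (C k) * XsP A B' C k)) p q).coeff (k+1) = (B' k * Lp B' k) p q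
    rw [Matrix.mul_apply, Polynomial.finset_sum_coeff, Matrix.mul_apply]
    refine Finset.sum_congr rfl fun r _ => ?_
    rw [show (pc (B' k)) p r = Polynomial.C (B' k p r) from rfl, Polynomial.coeff_C_mul]
    congr 1
    rw [Matrix.sub_apply, Matrix.mul_apply, Matrix.mul_apply, Polynomial.coeff_sub,
      Polynomial.finset_sum_coeff, Polynomial.finset_sum_coeff]
    have hsecond : ∀ s, ((pc (C k)) r s * XsP A B' C k s q).coeff (k+1) = 0 := by
      intro s
      rw [show (pc (C k)) r s = Polynomial.C (C k r s) from rfl, Polynomial.coeff_C_mul]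
      rw [Polynomial.coeff_eq_zero_of_natDegree_lt
        (lt_of_le_of_lt (entry_deg_le A B' C k s q) (by omega)), mul_zero]
    have hfirst : ∀ s, (((Polynomial.X : Polynomial ℂ) • (1 : Matrix (Fin m) (Fin m) (Polynomial ℂ))
        - pc (A k)) r s * XsP A B' C (k+1) s q).coeff (k+1)
        = if r = s then ((XsP A B' C (k+1)) s q).coeff k else 0 := by
      intro s
      rw [Matrix.sub_apply, Matrix.smul_apply, Matrix.one_apply,
        show (pc (A k)) r s = Polynomial.C (A k r s) from rfl, sub_mul,
        Polynomial.coeff_sub, Polynomial.coeff_C_mul,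
        Polynomial.coeff_eq_zero_of_natDegree_lt
          (lt_of_le_of_lt (entry_deg_le A B' C (k+1) s q) (by omega)), mul_zero, sub_zero]
      split_ifs with h
      · rw [smul_mul_assoc, one_mul, smul_eq_mul, Polynomial.coeff_X_mul]
      · rw [smul_mul_assoc, zero_mul, smul_zero, Polynomial.coeff_zero]
    rw [Finset.sum_congr rfl fun s _ => hfirst s, Finset.sum_congr rfl fun s _ => hsecond s]
    rw [Finset.sum_const_zero, sub_zero, Finset.sum_ite_eq Finset.univ r
      (fun s => ((XsP A B' C (k+1)) s q).coeff k), if_pos (Finset.mem_univ r)]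
    exact ih r q

lemma Lp_isUnit (hB' : ∀ k, IsUnit (B' k)) : ∀ k, IsUnit (Lp B' k) := by
  intro k
  induction k with
  | zero => exact isUnit_one
  | succ k ih => exact (hB' k).mul ih

lemma det_XsP_ne_zero (hB' : ∀ k, IsUnit (B' k)) (k : ℕ) :
    (XsP A B' C (k+1)).det ≠ 0 := by
  have hc : ((XsP A B' C (k+1)).det).coeff (m * k) = (Lp B' k).det := by
    rw [Matrix.det_apply', Matrix.det_apply' (Lp B' k), Polynomial.finset_sum_coeff]
    refine Finset.sum_congr rfl fun σ _ => ?_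
    rw [show ((Equiv.Perm.sign σ : ℤ) : Polynomial ℂ)
        = Polynomial.C ((Equiv.Perm.sign σ : ℤ) : ℂ) from (map_intCast _ _).symm,
      Polynomial.coeff_C_mul]
    congr 1
    have hco := Polynomial.coeff_prod_of_natDegree_le (s := (Finset.univ : Finset (Fin m)))
      (fun i => XsP A B' C (k+1) (σ i) i) k
      (fun p _ => by simpa using entry_deg_le A B' C (k+1) (σ p) p)
    rw [Finset.card_univ, Fintype.card_fin] at hco
    rw [hco]
    exact Finset.prod_congr rfl fun i _ => entry_coeff A B' C k (σ i) i
  intro hzero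
  rw [hzero, Polynomial.coeff_zero] at hc
  have : IsUnit (Lp B' k).det := (Matrix.isUnit_iff_isUnit_det _).mp (Lp_isUnit B' hB' k)
  rw [← hc] at this
  exact (isUnit_iff_ne_zero.mp this) rfl

end poly

lemma transfer_blocks (A B C : ℕ → Matrix (Fin m) (Fin m) ℂ) (E : ℂ) (k : ℕ) :
    (((List.ofFn fun i : Fin k => tstep (A i) (B i) (C i) E).reverse).prod).toBlocks₁₁
      = Xs A (fun j => (B j)⁻¹) C E (k+1) ∧
    (((List.ofFn fun i : Fin k => tstep (A i) (B i) (C i) E).reverse).prod).toBlocks₂₁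
      = Xs A (fun j => (B j)⁻¹) C E k := by
  induction k with
  | zero =>
    constructor <;>
      simp [Xs, ← Matrix.fromBlocks_one, Matrix.toBlocks_fromBlocks₁₁,
        Matrix.toBlocks_fromBlocks₂₁]
  | succ k ih =>
    rw [List.ofFn_succ']
    simp only [List.concat_eq_append, List.reverse_append, List.reverse_cons, List.reverse_nil,
      List.nil_append, List.cons_append, List.prod_cons, Fin.coe_castSucc, Fin.val_last]
    set P := ((List.ofFn fun i : Fin k => tstep (A i) (B i) (C i) E).reverse).prod with hP
    have hPblocks :
        P = Matrix.fromBlocks P.toBlocks₁₁ P.toBlocks₁₂ P.toBlocks₂₁ P.toBlocks₂₂ :=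
      (Matrix.fromBlocks_toBlocks P).symm
    rw [hPblocks, tstep, Matrix.fromBlocks_multiply, ih.1, ih.2]
    constructor
    · rw [Matrix.toBlocks_fromBlocks₁₁]
      show _ = (B k)⁻¹ * ((E • 1 - A k) * Xs A (fun j => (B j)⁻¹) C E (k+1)
          - C k * Xs A (fun j => (B j)⁻¹) C E k)
      noncomm_ring
    · rw [Matrix.toBlocks_fromBlocks₂₁]
      simp

section mapping
lemma map_smul_one {R S : Type*} [CommRing R] [CommRing S] (f : R →+* S) (e : R) :
    ((e • (1 : Matrix (Fin m) (Fin m) R)).map f) = f e • 1 := by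
  ext p q
  simp [Matrix.map_apply, Matrix.one_apply, apply_ite f, mul_ite]

lemma Xs_map {R S : Type*} [CommRing R] [CommRing S] (f : R →+* S)
    (A B' C : ℕ → Matrix (Fin m) (Fin m) R) (e : R) (k : ℕ) :
    (Xs A B' C e k).map f
      = Xs (fun j => (A j).map f) (fun j => (B' j).map f) (fun j => (C j).map f) (f e) k := by
  induction k using Nat.strong_induction_on with
  | _ k ih =>
    match k with
    | 0 => simp [Xs]
    | 1 => simp [Xs]
    | (k+2) =>
      rw [Xs, Xs, ← ih (k+1) (by omega), ← ih k (by omega)]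
      rw [Matrix.map_mul, Matrix.map_sub, Matrix.map_mul, Matrix.map_mul, Matrix.map_sub,
        map_smul_one] <;> exact map_sub f

lemma pc_map (E : ℂ) (M : Matrix (Fin m) (Fin m) ℂ) :
    (pc M).map (Polynomial.eval E) = M := by
  ext p q
  exact Polynomial.eval_C

lemma emb_map {R S : Type*} [CommRing R] [CommRing S] {n : ℕ} (f : R →+* S)
    (g : Fin n → Fin n → Matrix (Fin m) (Fin m) R) :
    (emb g).map f = emb (fun i j => (g i j).map f) := rfl
end mapping

section keylemma

lemma Mb_map (E : ℂ) (A B C : ℕ → Matrix (Fin m) (Fin m) ℂ) (n : ℕ) (i j : Fin n) :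
    (Mb (fun j => pc (A j)) (fun j => pc (B j)) (fun j => pc (C j)) Polynomial.X n i j).map
      ⇑(Polynomial.evalRingHom E) = Mb A B C E n i j := by
  unfold Mb
  split_ifs with h1 h2 h3
  · ext x y
    simp [Matrix.map_apply, Matrix.sub_apply, Matrix.smul_apply, Matrix.one_apply, pc,
      Matrix.map_apply, apply_ite (Polynomial.eval E), smul_eq_mul]
  · ext x y
    simp [Matrix.map_apply, pc, Matrix.neg_apply]
  · ext x y
    simp [Matrix.map_apply, pc, Matrix.neg_apply]
  · ext x y
    simp [Matrix.map_apply]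

lemma XsP_eval (E : ℂ) (A B' C : ℕ → Matrix (Fin m) (Fin m) ℂ) (k : ℕ) :
    (XsP A B' C k).map (Polynomial.eval E) = Xs A B' C E k := by
  rw [show (Polynomial.eval E : Polynomial ℂ → ℂ) = ⇑(Polynomial.evalRingHom E) from rfl,
    XsP, Xs_map]
  simp only [Polynomial.coe_evalRingHom, pc_map, Polynomial.eval_X]

lemma key (n : ℕ) (hn : 1 ≤ n) (A B C : ℕ → Matrix (Fin m) (Fin m) ℂ)
    (hB : ∀ k, IsUnit (B k)) (E : ℂ) :
    (emb (Mb A B C E n)).det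
      = (Xs A (fun j => (B j)⁻¹) C E (n+1)).det * ∏ i : Fin n, (B i).det := by
  set B' : ℕ → Matrix (Fin m) (Fin m) ℂ := fun j => (B j)⁻¹ with hB'def
  have hBB' : ∀ k, B k * B' k = 1 :=
    fun k => Matrix.mul_nonsing_inv _ ((Matrix.isUnit_iff_isUnit_det _).mp (hB k))
  have hB' : ∀ k, IsUnit (B' k) := fun k => Matrix.isUnit_nonsing_inv_iff.mpr (hB k)
  have hBB'p : ∀ k, pc (B k) * pc (B' k) = 1 := by
    intro k
    rw [pc, pc, ← Matrix.map_mul, hBB' k]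
    exact Matrix.map_one _ (map_zero _) (map_one _)
  obtain ⟨t, rfl⟩ : ∃ t, n = t + 1 := ⟨n - 1, by omega⟩
  -- the factorization identity over the polynomial ring
  have hfact := fact (n := t + 1) (fun j => pc (A j)) (fun j => pc (B j)) (fun j => pc (B' j))
    (fun j => pc (C j)) Polynomial.X hBB'p
  have hXsP : ∀ k, Xs (fun j => pc (A j)) (fun j => pc (B' j)) (fun j => pc (C j))
      Polynomial.X k = XsP A B' C k := fun k => rfl
  simp only [hXsP] at hfact
  rw [Fin.prod_univ_eq_prod_range (fun i => (XsP A B' C (i+1)).det),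
    Fin.prod_univ_eq_prod_range (fun i => (XsP A B' C (i+2)).det),
    Finset.prod_range_succ' (fun i => (XsP A B' C (i+1)).det),
    Finset.prod_range_succ (fun i => (XsP A B' C (i+2)).det)] at hfact
  have hone : (XsP A B' C (0+1)).det = 1 := by
    rw [show XsP A B' C (0+1) = 1 from rfl, Matrix.det_one]
  rw [hone, mul_one] at hfact
  set κ : Polynomial ℂ := ∏ i ∈ Finset.range t, (XsP A B' C (i+1+1)).det with hκ
  have hκne : κ ≠ 0 := by
    rw [hκ]
    exact Finset.prod_ne_zero_iff.mpr fun i _ => det_XsP_ne_zero A B' C hB' (i+1)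
  have hpoly : (emb (Mb (fun j => pc (A j)) (fun j => pc (B j)) (fun j => pc (C j))
      Polynomial.X (t+1))).det
      = (XsP A B' C (t+2)).det * ∏ i : Fin (t+1), (pc (B i) : Matrix (Fin m) (Fin m) (Polynomial ℂ)).det := by
    apply mul_right_cancel₀ hκne
    rw [hfact]
    ring
  -- evaluate at E
  have heval := congrArg (Polynomial.evalRingHom E) hpoly
  rw [RingHom.map_det, RingHom.mapMatrix_apply, emb_map] at heval
  have hMb : (fun (i j : Fin (t+1)) => (Mb (fun j => pc (A j)) (fun j => pc (B j))
      (fun j => pc (C j)) Polynomial.X (t+1) i j).map ⇑(Polynomial.evalRingHom E))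
      = Mb A B C E (t+1) := funext fun i => funext fun j => Mb_map E A B C (t+1) i j
  rw [hMb, _root_.map_mul, map_prod] at heval
  simp only [RingHom.map_det, RingHom.mapMatrix_apply, XsP_eval,
    Polynomial.coe_evalRingHom, pc_map] at heval
  exact heval

end keylemma
end aux

/-- Duality for the open chain:
`det (E·1 - h) = det T(E)_{1,1} · det B_1 ⋯ det B_n`. -/
theorem stmt5 {n m : ℕ} (hn : 2 ≤ n) (hm : 1 ≤ m)
    (A B C : Fin n → Matrix (Fin m) (Fin m) ℂ)
    (hB : ∀ k, IsUnit (B k)) (hC : ∀ k, IsUnit (C k)) (E : ℂ) :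
    (E • (1 : Matrix (Fin n × Fin m) (Fin n × Fin m) ℂ) - hopen A B C).det =
      ((transfer A B C E).toBlocks₁₁).det * ∏ k, (B k).det := by
  classical
  set A' : ℕ → Matrix (Fin m) (Fin m) ℂ := fun k => if h : k < n then A ⟨k, h⟩ else 1 with hA'def
  set B' : ℕ → Matrix (Fin m) (Fin m) ℂ := fun k => if h : k < n then B ⟨k, h⟩ else 1 with hB'def
  set C' : ℕ → Matrix (Fin m) (Fin m) ℂ := fun k => if h : k < n then C ⟨k, h⟩ else 1 with hC'def
  have hA' : ∀ i : Fin n, A' (i : ℕ) = A i := by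
    intro i
    rw [hA'def]
    simp [i.isLt]
  have hB' : ∀ i : Fin n, B' (i : ℕ) = B i := by
    intro i
    rw [hB'def]
    simp [i.isLt]
  have hC' : ∀ i : Fin n, C' (i : ℕ) = C i := by
    intro i
    rw [hC'def]
    simp [i.isLt]
  have hBu : ∀ k, IsUnit (B' k) := by
    intro k
    rw [hB'def]
    by_cases h : k < n
    · simpa [h] using hB ⟨k, h⟩
    · simpa [h] using isUnit_one
  -- identify the shifted matrix with `emb (Mb ...)`
  have hM : E • (1 : Matrix (Fin n × Fin m) (Fin n × Fin m) ℂ) - hopen A B C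
      = emb (Mb A' B' C' E n) := by
    ext ⟨i, x⟩ ⟨j, y⟩
    show E * (if (i, x) = (j, y) then (1:ℂ) else 0)
        - ((if i = j then A i x y else 0)
          + (if (i:ℕ)+1 = (j:ℕ) then B i x y else 0)
          + (if (j:ℕ)+1 = (i:ℕ) then C i x y else 0))
      = (if i = j then E • 1 - A' (i:ℕ) else if (i:ℕ)+1 = (j:ℕ) then -B' (i:ℕ)
          else if (j:ℕ)+1 = (i:ℕ) then -C' (i:ℕ) else 0) x y
    by_cases h1 : i = j
    · subst h1
      rw [if_pos rfl, if_pos rfl, if_neg (by omega : ¬(i:ℕ)+1 = (i:ℕ)),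
        if_neg (by omega : ¬(i:ℕ)+1 = (i:ℕ)), hA']
      simp [Prod.ext_iff, Matrix.sub_apply, Matrix.smul_apply, Matrix.one_apply, smul_eq_mul,
        mul_ite]
    · have h1' : ¬ ((i,x) = (j,y)) := by simp [Prod.ext_iff, h1]
      rw [if_neg h1, if_neg h1, if_neg h1']
      by_cases h2 : (i : ℕ) + 1 = (j : ℕ)
      · rw [if_pos h2, if_pos h2, if_neg (by omega), hB']
        simp [Matrix.neg_apply]
      · rw [if_neg h2, if_neg h2]
        by_cases h3 : (j : ℕ) + 1 = (i : ℕ)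
        · rw [if_pos h3, if_pos h3, hC']
          simp [Matrix.neg_apply]
        · rw [if_neg h3, if_neg h3]
          simp
  -- identify the transfer matrix block
  have hT : (transfer A B C E).toBlocks₁₁ = Xs A' (fun j => (B' j)⁻¹) C' E (n+1) := by
    rw [transfer, show (fun k : Fin n => tstep (A k) (B k) (C k) E)
        = fun k : Fin n => tstep (A' (k : ℕ)) (B' (k : ℕ)) (C' (k : ℕ)) E from
      funext fun k => by rw [hA', hB', hC']]
    exact (transfer_blocks A' B' C' E n).1
  rw [hM, hT, key n (by omega) A' B' C' hBu E]
  congr 1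
  exact Finset.prod_congr rfl fun i _ => by rw [hB']
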